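/- arXiv:1801.06882 — 2 statements merged into one kernel-verified Lean document; each statement's English description precedes it below -/
import Mathlib

section
/- If a matroid M is k-closure-laminar, then M is k-laminar. -/
open Set

namespace Matroid

variable {α : Type*}

/-- A circuit is a minimal dependent set. -/
def Circuit (M : Matroid α) (C : Set α) : Prop := Minimal M.Dep C

/-- The rank of a set: the supremum of sizes of independent subsets. -/
noncomputable def rk (M : Matroid α) (X : Set α) : ℕ :=
  sSup {n | ∃ I, I ⊆ X ∧ M.Indep I ∧ I.ncard = n}

/-- A Hamiltonian flat is a flat with a spanning circuit. -/
def HamFlat (M : Matroid α) (F : Set α) : Prop :=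
  M.IsFlat F ∧ ∃ C, M.Circuit C ∧ C ⊆ F ∧ M.closure C = F

/-- `M` is `k`-closure-laminar if the Hamiltonian flats containing any given
`k`-element independent set form a chain under inclusion. -/
def KClosureLaminar (M : Matroid α) (k : ℕ) : Prop :=
  ∀ X ⊆ M.E, M.Indep X → X.ncard = k →
    IsChain (· ⊆ ·) {F | M.HamFlat F ∧ X ⊆ F}

/-- `M` is `k`-laminar if whenever two circuits meet in at least `k` elements,
one is contained in the closure of the other. -/
def KLaminar (M : Matroid α) (k : ℕ) : Prop :=
  ∀ C₁ C₂, M.Circuit C₁ → M.Circuit C₂ → k ≤ (C₁ ∩ C₂).ncard →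
    C₁ ⊆ M.closure C₂ ∨ C₂ ⊆ M.closure C₁

/-- Deletion of a set of elements. -/
def delete' (M : Matroid α) (D : Set α) : Matroid α := M.restrict (M.E \ D)

/-- Contraction of a set of elements, defined via duality. -/
def contract' (M : Matroid α) (C : Set α) : Matroid α := (M✶.delete' C)✶

end Matroid

lemma Matroid.flat_closure' (M : Matroid α) (X : Set α) : M.IsFlat (M.closure X) := by
  rw [Matroid.closure_def, sInter_eq_iInter]
  have hne : Nonempty ↑{F | M.IsFlat F ∧ X ∩ M.E ⊆ F} :=
    ⟨⟨M.E, M.ground_isFlat, inter_subset_right⟩⟩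
  exact Matroid.IsFlat.iInter fun F ↦ F.2.1

/-- every `k`-closure-laminar matroid is `k`-laminar. -/
theorem kLaminar_of_kClosureLaminar {α : Type*} (M : Matroid α) [M.Finite] (k : ℕ)
    (h : M.KClosureLaminar k) : M.KLaminar k := by
  intro C₁ C₂ hC₁ hC₂ hk
  by_cases hsub : C₁ ⊆ C₂
  · exact Or.inl (hsub.trans (M.subset_closure C₂ hC₂.prop.subset_ground))
  by_cases hsub2 : C₂ ⊆ C₁
  · exact Or.inr (hsub2.trans (M.subset_closure C₁ hC₁.prop.subset_ground))
  -- C₁ ∩ C₂ is a proper subset of C₁, hence independent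
  have hIindep : M.Indep (C₁ ∩ C₂) := by
    by_contra hdep
    have hdep' : M.Dep (C₁ ∩ C₂) :=
      ⟨hdep, (inter_subset_left).trans hC₁.prop.subset_ground⟩
    have : C₁ ⊆ C₁ ∩ C₂ := hC₁.le_of_le hdep' inter_subset_left
    exact hsub (this.trans inter_subset_right)
  obtain ⟨X, hXsub, hXcard⟩ := Set.exists_subset_card_eq hk
  have hXindep : M.Indep X := hIindep.subset hXsub
  have hchain := h X (hXindep.subset_ground) hXindep hXcard
  have hF₁ : M.HamFlat (M.closure C₁) ∧ X ⊆ M.closure C₁ :=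
    ⟨⟨M.flat_closure' C₁, C₁, hC₁, M.subset_closure C₁ hC₁.prop.subset_ground, rfl⟩,
      (hXsub.trans inter_subset_left).trans (M.subset_closure C₁ hC₁.prop.subset_ground)⟩
  have hF₂ : M.HamFlat (M.closure C₂) ∧ X ⊆ M.closure C₂ :=
    ⟨⟨M.flat_closure' C₂, C₂, hC₂, M.subset_closure C₂ hC₂.prop.subset_ground, rfl⟩,
      (hXsub.trans inter_subset_right).trans (M.subset_closure C₂ hC₂.prop.subset_ground)⟩
  by_cases heq : M.closure C₁ = M.closure C₂
  · exact Or.inl (heq ▸ M.subset_closure C₁ hC₁.prop.subset_ground)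
  rcases hchain hF₁ hF₂ heq with h' | h'
  · exact Or.inl ((M.subset_closure C₁ hC₁.prop.subset_ground).trans h')
  · exact Or.inr ((M.subset_closure C₂ hC₂.prop.subset_ground).trans h')
end

section
/- The class of 2-closure-laminar matroids is minor-closed; that is, every deletion and every contraction of a 2-closure-laminar matroid is 2-closure-laminar. -/
open Set

namespace Matroid

variable {α : Type*} {M : Matroid α} {C D I J R S X F A : Set α} {a b c e x z : α}

/-! ### Basic circuit lemmas -/

lemma Circuit.dep (hC : M.Circuit C) : M.Dep C := hC.1

lemma Circuit.subset_ground (hC : M.Circuit C) : C ⊆ M.E := hC.1.subset_ground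

lemma Circuit.ssubset_indep (hC : M.Circuit C) (hI : I ⊂ C) : M.Indep I := by
  by_contra h'
  have hdep : M.Dep I := ⟨h', hI.subset.trans hC.subset_ground⟩
  exact hI.ne (subset_antisymm hI.subset (hC.2 hdep hI.subset))

lemma Circuit.nonempty (hC : M.Circuit C) : C.Nonempty := by
  rw [Set.nonempty_iff_ne_empty]
  rintro rfl
  exact hC.dep.not_indep M.empty_indep

lemma Circuit.diff_singleton_indep (hC : M.Circuit C) (he : e ∈ C) : M.Indep (C \ {e}) :=
  hC.ssubset_indep (Set.sdiff_singleton_ssubset.2 he)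

lemma Circuit.mem_closure_diff_singleton (hC : M.Circuit C) (he : e ∈ C) :
    e ∈ M.closure (C \ {e}) := by
  have hI := hC.diff_singleton_indep he
  have hd : M.Dep (insert e (C \ {e})) := by
    rw [insert_diff_singleton, insert_eq_of_mem he]
    exact hC.dep
  exact (hI.insert_dep_iff.1 hd).1

lemma Circuit.closure_diff_singleton (hC : M.Circuit C) (e : α) :
    M.closure (C \ {e}) = M.closure C := by
  by_cases he : e ∈ C
  · exact closure_diff_singleton_eq_closure (hC.mem_closure_diff_singleton he)
  · rw [diff_singleton_eq_self he]

lemma Dep.exists_circuit_subset (hD : M.Dep D) (hfin : D.Finite) : ∃ C, C ⊆ D ∧ M.Circuit C := by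
  have hsfin : {C | C ⊆ D ∧ M.Dep C}.Finite :=
    hfin.finite_subsets.subset (fun C hC => hC.1)
  obtain ⟨C, hCs, hmin⟩ := hsfin.exists_minimal ⟨D, Subset.rfl, hD⟩
  refine ⟨C, hCs.1, hCs.2, fun D' hD' hD'C => ?_⟩
  exact hmin ⟨hD'C.trans hCs.1, hD'⟩ hD'C

/-- a flat version of closure -/
lemma closure_flat' (M : Matroid α) (X : Set α) : M.IsFlat (M.closure X) := by
  refine ⟨fun I Y hIF hIY => ?_, M.closure_subset_ground X⟩
  have := hIY.subset_closure
  rwa [hIF.closure_eq_closure, closure_closure] at this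

/-- an independent set contained in the closure of another independent set is not bigger -/
lemma Indep.encard_le_encard_of_subset_closure (hJ : M.Indep J) (hI : M.Indep I)
    (hJI : J ⊆ M.closure I) : J.encard ≤ I.encard := by
  obtain ⟨J', hJ', hJJ'⟩ := hJ.subset_isBasis_of_subset hJI (M.closure_subset_ground I)
  rw [← hJ'.encard_eq_encard hI.isBasis_closure]
  exact encard_le_encard hJJ'

/-- fundamental circuit, with control on forced elements -/
lemma Indep.exists_circuit_insert (hI : M.Indep I) (hfin : I.Finite) (hzI : z ∉ I)
    (hz : z ∈ M.closure I) :
    ∃ A, M.Circuit A ∧ z ∈ A ∧ A ⊆ insert z I ∧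
      ∀ x ∈ I, z ∉ M.closure (I \ {x}) → x ∈ A := by
  have hdep : M.Dep (insert z I) := hI.insert_dep_iff.2 ⟨hz, hzI⟩
  obtain ⟨A, hAsub, hA⟩ := hdep.exists_circuit_subset (hfin.insert z)
  have hzA : z ∈ A := by
    by_contra hzA
    have : A ⊆ I := fun y hy => by
      rcases hAsub hy with h | h
      · exact absurd (h ▸ hy) hzA
      · exact h
    exact hA.dep.not_indep (hI.subset this)
  refine ⟨A, hA, hzA, hAsub, fun x hx hxcl => ?_⟩
  by_contra hxA
  have hAz : A \ {z} ⊆ I \ {x} := by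
    rintro y ⟨hyA, hyz⟩
    rcases hAsub hyA with h | h
    · exact absurd h hyz
    · exact ⟨h, fun h' => hxA (h' ▸ hyA)⟩
  exact hxcl (M.closure_subset_closure hAz (hA.mem_closure_diff_singleton hzA))

end Matroid
namespace Matroid

variable {α : Type*} {M : Matroid α} {C C₁ C₂ D I I' J R S X F A : Set α} {a b c e x z : α}

/-! ### The two-closure-laminar property as a circuit condition -/

def TwoCL (M : Matroid α) : Prop :=
  ∀ ⦃C₁ C₂ : Set α⦄ ⦃a b : α⦄, M.Circuit C₁ → M.Circuit C₂ → a ≠ b → M.Indep {a, b} →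
    {a, b} ⊆ M.closure C₁ → {a, b} ⊆ M.closure C₂ →
    M.closure C₁ ⊆ M.closure C₂ ∨ M.closure C₂ ⊆ M.closure C₁

lemma KClosureLaminar.twoCL (h : M.KClosureLaminar 2) : M.TwoCL := by
  intro C₁ C₂ a b h₁ h₂ hab hind hs₁ hs₂
  by_cases heq : M.closure C₁ = M.closure C₂
  · exact Or.inl heq.subset
  have hXE : {a, b} ⊆ M.E := hs₁.trans (M.closure_subset_ground C₁)
  have hchain := h {a, b} hXE hind (Set.ncard_pair hab)
  exact hchain (show _ ∈ {F | M.HamFlat F ∧ {a,b} ⊆ F} from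
      ⟨⟨M.closure_flat' C₁, C₁, h₁, M.subset_closure C₁ h₁.subset_ground, rfl⟩, hs₁⟩)
    (show _ ∈ {F | M.HamFlat F ∧ {a,b} ⊆ F} from
      ⟨⟨M.closure_flat' C₂, C₂, h₂, M.subset_closure C₂ h₂.subset_ground, rfl⟩, hs₂⟩) heq

lemma TwoCL.kClosureLaminar (h : M.TwoCL) : M.KClosureLaminar 2 := by
  intro X hXE hXi hX2
  obtain ⟨a, b, hab, rfl⟩ := Set.ncard_eq_two.1 hX2
  rintro F₁ ⟨⟨hF₁, C₁, hC₁, hC₁F, rfl⟩, hXF₁⟩ F₂ ⟨⟨hF₂, C₂, hC₂, hC₂F, rfl⟩, hXF₂⟩ _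
  exact h hC₁ hC₂ hab hXi hXF₁ hXF₂

/-! ### Restriction -/

lemma restrict_circuit_iff (hR : R ⊆ M.E) (hC : (M ↾ R).Circuit C) : M.Circuit C ∧ C ⊆ R := by
  have hCR : C ⊆ R := hC.dep.subset_ground
  have hdep : M.Dep C :=
    ⟨fun hi => hC.dep.not_indep (restrict_indep_iff.2 ⟨hi, hCR⟩), hCR.trans hR⟩
  refine ⟨⟨hdep, fun D hD hDC => hC.2 ?_ hDC⟩, hCR⟩
  exact ⟨fun hi => hD.not_indep (restrict_indep_iff.1 hi).1,
    show D ⊆ (M ↾ R).E from (hDC.trans hCR)⟩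

lemma closure_restrict_eq (hR : R ⊆ M.E) (hS : S ⊆ R) :
    (M ↾ R).closure S = M.closure S ∩ R := by
  obtain ⟨I, hI⟩ := (M ↾ R).exists_isBasis S (by simpa using hS)
  have hIS : I ⊆ S := hI.subset
  have hIi : M.Indep I := (restrict_indep_iff.1 hI.indep).1
  have hIR : I ⊆ R := hIS.trans hS
  have hcl : (M ↾ R).closure I = M.closure I ∩ R := by
    ext y
    rw [mem_inter_iff, hI.indep.mem_closure_iff', hIi.mem_closure_iff', restrict_ground_eq,
      restrict_indep_iff]
    constructor
    · rintro ⟨hyR, h2⟩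
      exact ⟨⟨hR hyR, fun hy => h2 ⟨hy, insert_subset hyR hIR⟩⟩, hyR⟩
    · rintro ⟨⟨hyE, h2⟩, hyR⟩
      exact ⟨hyR, fun hy => h2 hy.1⟩
  have h1 : M.closure I = M.closure S := by
    refine subset_antisymm (M.closure_subset_closure hIS) ?_
    refine M.closure_subset_closure_of_subset_closure ?_
    intro y hy
    have := hI.subset_closure hy
    rw [hcl] at this
    exact this.1
  rw [← hI.closure_eq_closure, hcl, h1]

lemma TwoCL.restrict (h : M.TwoCL) (hR : R ⊆ M.E) : (M ↾ R).TwoCL := by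
  intro C₁ C₂ a b h₁ h₂ hab hind hs₁ hs₂
  obtain ⟨h₁', hC₁R⟩ := restrict_circuit_iff hR h₁
  obtain ⟨h₂', hC₂R⟩ := restrict_circuit_iff hR h₂
  rw [closure_restrict_eq hR hC₁R] at hs₁ ⊢
  rw [closure_restrict_eq hR hC₂R] at hs₂ ⊢
  have hind' : M.Indep {a, b} := (restrict_indep_iff.1 hind).1
  rcases h h₁' h₂' hab hind' (hs₁.trans inter_subset_left) (hs₂.trans inter_subset_left) with
    hss | hss
  · exact Or.inl (inter_subset_inter_left R hss)
  · exact Or.inr (inter_subset_inter_left R hss)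

lemma TwoCL.delete (h : M.TwoCL) (X : Set α) : (M.delete' X).TwoCL :=
  h.restrict diff_subset

end Matroid
namespace Matroid

variable {α : Type*} {M : Matroid α} {B C C₁ C₂ D I I' J R S X Y F A : Set α} {a b c e x z : α}

/-! ### Contraction -/

lemma contract'_ground (M : Matroid α) (X : Set α) : (M.contract' X).E = M.E \ X := rfl

lemma contract_inter_ground (M : Matroid α) (X : Set α) :
    M.contract' (X ∩ M.E) = M.contract' X := by
  unfold contract' delete'
  rw [dual_ground, diff_inter_self_eq_diff]

lemma contract'_empty (M : Matroid α) : M.contract' ∅ = M := by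
  unfold contract' delete'
  rw [diff_empty, restrict_ground_eq_self, dual_dual]

lemma contract'_contract (M : Matroid α) (X Y : Set α) :
    (M.contract' X).contract' Y = M.contract' (X ∪ Y) := by
  unfold contract' delete'
  rw [dual_dual, dual_ground, restrict_ground_eq,
    M✶.restrict_restrict_eq diff_subset, diff_diff]

/-- exchanging one basis of `X` for another preserves independence of unions -/
lemma basis_exchange_indep (hI : M.IsBasis I X) (hI' : M.IsBasis I' X) (hJX : Disjoint J X)
    (hJI' : M.Indep (J ∪ I')) : M.Indep (J ∪ I) := by
  have hJE : J ∪ I ⊆ M.E :=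
    union_subset ((subset_union_left).trans hJI'.subset_ground) hI.indep.subset_ground
  obtain ⟨K, hK, hIK⟩ := hI.indep.subset_isBasis_of_subset (subset_union_right (s := J)) hJE
  have hJK : J ⊆ K := by
    by_contra hJK
    obtain ⟨y, hyJ, hyK⟩ := not_subset.1 hJK
    have hycl : y ∈ M.closure K := hK.subset_closure (mem_union_left _ hyJ)
    have hKsub : K ⊆ (J \ {y}) ∪ I := by
      rintro w hw
      rcases hK.subset hw with h | h
      · exact Or.inl ⟨h, fun h' => hyK ((mem_singleton_iff.1 h') ▸ hw)⟩
      · exact Or.inr h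
    have hy2 : y ∈ M.closure ((J \ {y}) ∪ I) := M.closure_subset_closure hKsub hycl
    have hcleq : M.closure ((J \ {y}) ∪ I) = M.closure ((J \ {y}) ∪ I') := by
      calc M.closure ((J \ {y}) ∪ I) = M.closure ((J \ {y}) ∪ M.closure I) := by
            rw [closure_union_closure_right_eq]
        _ = M.closure ((J \ {y}) ∪ M.closure I') := by
            rw [hI.closure_eq_closure, hI'.closure_eq_closure]
        _ = M.closure ((J \ {y}) ∪ I') := by rw [closure_union_closure_right_eq]
    rw [hcleq] at hy2
    have hyI' : y ∉ I' := fun hyI' => (hJX.ne_of_mem hyJ (hI'.subset hyI')) rfl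
    have : (J \ {y}) ∪ I' = (J ∪ I') \ {y} := by
      rw [union_diff_distrib, diff_singleton_eq_self hyI']
    rw [this] at hy2
    exact hJI'.notMem_closure_diff_of_mem (mem_union_left _ hyJ) hy2
  have : K = J ∪ I := subset_antisymm hK.subset (union_subset hJK hIK)
  exact this ▸ hK.indep

lemma contract_indep_iff_of_basis (hX : X ⊆ M.E) (hI : M.IsBasis I X) :
    (M.contract' X).Indep J ↔ J ⊆ M.E \ X ∧ M.Indep (J ∪ I) := by
  have hground : (M✶ ↾ (M✶.E \ X)).E = M.E \ X := by rw [restrict_ground_eq, dual_ground]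
  have hiff : (M.contract' X).Indep J ↔
      J ⊆ M.E \ X ∧ ∃ B, (M✶ ↾ (M✶.E \ X)).IsBase B ∧ Disjoint J B := by
    rw [show M.contract' X = (M✶ ↾ (M✶.E \ X))✶ from rfl, dual_indep_iff_exists', hground]
  rw [hiff]
  constructor
  · rintro ⟨hJE, B, hB, hJB⟩
    refine ⟨hJE, ?_⟩
    rw [isBase_restrict_iff', dual_ground,
      isBasis'_iff_isBasis (show M.E \ X ⊆ M✶.E from diff_subset)] at hB
    obtain ⟨B', hB', hBB'⟩ := hB.indep.exists_isBase_superset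
    have hBeq : B = B' ∩ (M.E \ X) :=
      hB.eq_of_subset_indep (hB'.indep.subset inter_subset_left)
        (subset_inter hBB' hB.subset) inter_subset_right
    have hbasisX : M.IsBasis ((M.E \ B') ∩ X) X := by
      have h2 := (hB'.inter_isBasis_iff_compl_inter_isBasis_dual
        (show M.E \ X ⊆ M✶.E from diff_subset)).1 (hBeq ▸ hB)
      rwa [dual_dual, dual_ground, diff_diff_cancel_left hX] at h2
    have hB₁ : M.IsBase (M.E \ B') := hB'.compl_isBase_of_dual
    have hJB₁ : J ⊆ M.E \ B' := by
      intro y hy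
      refine ⟨(hJE hy).1, fun hyB' => ?_⟩
      exact hJB.ne_of_mem hy (by rw [hBeq]; exact ⟨hyB', hJE hy⟩) rfl
    have hind : M.Indep (J ∪ ((M.E \ B') ∩ X)) :=
      hB₁.indep.subset (union_subset hJB₁ inter_subset_left)
    exact basis_exchange_indep hI hbasisX
      (disjoint_left.2 fun y hy => (hJE hy).2) hind
  · rintro ⟨hJE, hind⟩
    obtain ⟨B₀, hB₀, hJIB₀⟩ := hind.exists_isBase_superset
    have hIB₀ : I ⊆ B₀ ∩ X := subset_inter ((subset_union_right).trans hJIB₀) hI.subset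
    have hbasis : M.IsBasis (B₀ ∩ X) X := by
      refine (hB₀.indep.subset inter_subset_left).isBasis_of_subset_of_subset_closure
        inter_subset_right ?_
      exact hI.subset_closure.trans (M.closure_subset_closure hIB₀)
    have hdual := hB₀.compl_inter_isBasis_of_inter_isBasis hbasis
    refine ⟨hJE, (M.E \ B₀) ∩ (M.E \ X), ?_, ?_⟩
    · rw [isBase_restrict_iff', dual_ground]
      exact (isBasis'_iff_isBasis (show M.E \ X ⊆ M✶.E from diff_subset)).2 hdual
    · exact disjoint_left.2 fun y hy hmem =>
        hmem.1.2 (hJIB₀ (mem_union_left _ hy))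

lemma contract_closure_eq_of_basis (hX : X ⊆ M.E) (hI : M.IsBasis I X) (hS : S ⊆ M.E \ X) :
    (M.contract' X).closure S = M.closure (S ∪ I) \ X := by
  set N := M.contract' X with hN
  obtain ⟨J, hJ⟩ := N.exists_isBasis S (by rw [hN, contract'_ground]; exact hS)
  have hJS : J ⊆ S := hJ.subset
  obtain ⟨hJE, hJIi⟩ := (contract_indep_iff_of_basis hX hI).1 hJ.indep
  have hcl : N.closure J = M.closure (J ∪ I) \ X := by
    ext y
    by_cases hyX : y ∈ M.E \ X
    · rw [hJ.indep.mem_closure_iff', mem_diff, hJIi.mem_closure_iff', hN, contract'_ground,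
        contract_indep_iff_of_basis hX hI]
      constructor
      · rintro ⟨-, himp⟩
        refine ⟨⟨hyX.1, fun hins => ?_⟩, hyX.2⟩
        rw [← insert_union] at hins
        exact mem_union_left _ (himp ⟨insert_subset hyX hJE, hins⟩)
      · rintro ⟨⟨-, himp⟩, -⟩
        refine ⟨hyX, fun hh => ?_⟩
        have hyJI : y ∈ J ∪ I := himp (by rw [← insert_union]; exact hh.2)
        rcases hyJI with h | h
        · exact h
        · exact absurd (hI.subset h) hyX.2
    · constructor
      · intro hy
        have h1 := N.closure_subset_ground J hy
        rw [hN, contract'_ground] at h1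
        exact (hyX h1).elim
      · rintro ⟨hy1, hy2⟩
        exact (hyX ⟨M.closure_subset_ground _ hy1, hy2⟩).elim
  have hcl2 : M.closure (J ∪ I) = M.closure (S ∪ I) := by
    refine subset_antisymm
      (M.closure_subset_closure (union_subset_union_left I hJS)) ?_
    refine M.closure_subset_closure_of_subset_closure (union_subset ?_ ?_)
    · intro y hy
      have := hJ.subset_closure hy
      rw [hcl] at this
      exact this.1
    · exact (subset_union_right).trans (M.subset_closure (J ∪ I) hJIi.subset_ground)
  rw [← hJ.closure_eq_closure, hcl, hcl2]

end Matroid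
namespace Matroid

variable {α : Type*} {M : Matroid α} {B C C₁ C₂ D I I' J R S X Y F A : Set α} {a b c e x z : α}

/-! ### Single-element contractions -/

lemma contract_singleton_indep_iff (he : M.Indep {e}) :
    (M.contract' {e}).Indep J ↔ J ⊆ M.E \ {e} ∧ M.Indep (J ∪ {e}) :=
  contract_indep_iff_of_basis he.subset_ground he.isBasis_self

lemma contract_singleton_dep_iff (he : M.Indep {e}) (hD : D ⊆ M.E \ {e}) :
    (M.contract' {e}).Dep D ↔ M.Dep (D ∪ {e}) := by
  rw [dep_iff, dep_iff, contract_singleton_indep_iff he, contract'_ground]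
  constructor
  · rintro ⟨h1, _⟩
    exact ⟨fun hind => h1 ⟨hD, hind⟩,
      union_subset (hD.trans diff_subset) he.subset_ground⟩
  · rintro ⟨h1, _⟩
    exact ⟨fun h => h1 h.2, hD⟩

lemma contract_singleton_circuit (hfin : M.E.Finite) (he : M.Indep {e})
    (hC : (M.contract' {e}).Circuit C) : ∃ D, M.Circuit D ∧ C ⊆ D ∧ D ⊆ C ∪ {e} := by
  have hCE : C ⊆ M.E \ {e} := by
    have := hC.dep.subset_ground
    rwa [contract'_ground] at this
  have hCdep' : M.Dep (C ∪ {e}) := (contract_singleton_dep_iff he hCE).1 hC.dep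
  by_cases hCind : M.Indep C
  · obtain ⟨D, hDsub, hD⟩ := hCdep'.exists_circuit_subset (hfin.subset hCdep'.subset_ground)
    have heD : e ∈ D := by
      by_contra heD
      have hDC : D ⊆ C := fun y hy =>
        (hDsub hy).resolve_right (fun h => heD ((mem_singleton_iff.1 h) ▸ hy))
      exact hD.dep.not_indep (hCind.subset hDC)
    have hdep2 : (M.contract' {e}).Dep (D \ {e}) := by
      rw [contract_singleton_dep_iff he (diff_subset_diff_left hD.subset_ground),
        diff_union_self]
      exact hD.dep.superset subset_union_left
        (union_subset hD.subset_ground he.subset_ground)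
    have hsub2 : D \ {e} ⊆ C := fun y hy =>
      (hDsub hy.1).resolve_right (fun h => hy.2 h)
    have hCsub : C ⊆ D \ {e} := hC.2 hdep2 hsub2
    refine ⟨D, hD, fun y hy => (hCsub hy).1, fun y hy => ?_⟩
    by_cases hye : y = e
    · exact Or.inr (hye ▸ rfl)
    · exact Or.inl (hsub2 ⟨hy, hye⟩)
  · have hCdep : M.Dep C := ⟨hCind, hCE.trans diff_subset⟩
    obtain ⟨D, hDsub, hD⟩ := hCdep.exists_circuit_subset (hfin.subset hCdep.subset_ground)
    have hdep2 : (M.contract' {e}).Dep D := by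
      rw [contract_singleton_dep_iff he (hDsub.trans hCE)]
      exact hD.dep.superset subset_union_left
        (union_subset hD.subset_ground he.subset_ground)
    have hDC : D = C := subset_antisymm hDsub (hC.2 hdep2 hDsub)
    exact ⟨C, hDC ▸ hD, Subset.rfl, subset_union_left⟩

lemma circuit_insert_aux (hC : M.Circuit C) (heE : e ∈ M.E) (heC : e ∉ M.closure C)
    (hx : x ∈ C) :
    M.Indep (insert e (C \ {x})) ∧ M.closure (insert e (C \ {x})) = M.closure (C ∪ {e}) := by
  have heCm : e ∉ C := fun h => heC (M.subset_closure C hC.subset_ground h)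
  constructor
  · rw [(hC.diff_singleton_indep hx).insert_indep_iff_of_notMem (fun h => heCm h.1)]
    refine ⟨heE, fun h => heC ?_⟩
    rwa [hC.closure_diff_singleton] at h
  · rw [union_singleton]
    calc M.closure (insert e (C \ {x})) = M.closure (insert e (M.closure (C \ {x}))) := by
          rw [closure_insert_closure_eq_closure_insert]
      _ = M.closure (insert e (M.closure C)) := by rw [hC.closure_diff_singleton]
      _ = M.closure (insert e C) := by rw [closure_insert_closure_eq_closure_insert]

/-- The key lemma: in a 2-closure-laminar matroid, if `C` is a circuit with `e ∉ cl C` but the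
flat `cl (C ∪ e)` contains a point `z` outside `cl C ∪ {e}`, then `cl (C ∪ e)` is Hamiltonian. -/
lemma TwoCL.exists_spanning_circuit (hM : M.TwoCL) (hfin : M.E.Finite)
    (hC : M.Circuit C) (heE : e ∈ M.E) (heC : e ∉ M.closure C) (hcard : 3 ≤ C.encard)
    (hz : z ∈ M.closure (C ∪ {e})) (hze : M.Indep {e, z}) (hzne : z ≠ e)
    (hzC : z ∉ M.closure C) :
    ∃ A, M.Circuit A ∧ M.closure A = M.closure (C ∪ {e}) := by
  have hCE := hC.subset_ground
  have hCfin : C.Finite := hfin.subset hCE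
  have heCm : e ∉ C := fun h => heC (M.subset_closure C hCE h)
  have hzCm : z ∉ C := fun h => hzC (M.subset_closure C hCE h)
  have hCecl : C ∪ {e} ⊆ M.closure (C ∪ {e}) :=
    M.subset_closure _ (union_subset hCE (singleton_subset_iff.2 heE))
  have step : ∀ x ∈ C, (∃ A, M.Circuit A ∧ M.closure A = M.closure (C ∪ {e})) ∨
      ∃ c, c ∈ C \ {x} ∧ c ∈ M.closure {e, z} := by
    intro x hx
    obtain ⟨hI₀, hI₀cl⟩ := circuit_insert_aux hC heE heC hx
    have hzI₀ : z ∉ insert e (C \ {x}) := by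
      rintro (rfl | h)
      · exact hzne rfl
      · exact hzCm h.1
    have hzcl : z ∈ M.closure (insert e (C \ {x})) := by rw [hI₀cl]; exact hz
    obtain ⟨A, hA, hzA, hAsub, hforce⟩ :=
      hI₀.exists_circuit_insert ((hCfin.diff (t := {x})).insert e) hzI₀ hzcl
    have heA : e ∈ A := by
      refine hforce e (mem_insert e _) ?_
      rw [insert_diff_self_of_notMem (fun h : e ∈ C \ {x} => heCm h.1),
        hC.closure_diff_singleton]
      exact hzC
    have hA'sub : A \ ({e, z} : Set α) ⊆ C \ {x} := by
      rintro y ⟨hyA, hyez⟩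
      rcases hAsub hyA with rfl | (rfl | h)
      · exact absurd (Or.inr rfl) hyez
      · exact absurd (Or.inl rfl) hyez
      · exact h
    have hA'ne : (A \ ({e, z} : Set α)).Nonempty := by
      rw [Set.nonempty_iff_ne_empty]
      intro hemp
      have : A ⊆ {e, z} := by
        intro y hy
        by_contra hyez
        have hmem : y ∈ A \ ({e, z} : Set α) := ⟨hy, hyez⟩
        rw [hemp] at hmem
        exact hmem
      exact hA.dep.not_indep (hze.subset this)
    have hAsubcl : A ⊆ M.closure (C ∪ {e}) := by
      intro y hy
      rcases hAsub hy with rfl | (rfl | h)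
      · exact hz
      · exact hCecl (Or.inr rfl)
      · exact hCecl (Or.inl h.1)
    by_cases htwo : ∃ u ∈ A \ ({e, z} : Set α), ∃ v ∈ A \ ({e, z} : Set α), u ≠ v
    · obtain ⟨u, hu, v, hv, huv⟩ := htwo
      have huvC : ({u, v} : Set α) ⊆ C := by
        rintro y (rfl | rfl)
        · exact (hA'sub hu).1
        · exact (hA'sub hv).1
      have huvne : ({u, v} : Set α) ≠ C := by
        intro h
        rw [← h, encard_pair huv] at hcard
        norm_num at hcard
      have huvind : M.Indep {u, v} := hC.ssubset_indep (huvC.ssubset_of_ne huvne)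
      have hsubA : ({u, v} : Set α) ⊆ M.closure A := by
        rintro y (rfl | rfl)
        · exact M.subset_closure A hA.subset_ground hu.1
        · exact M.subset_closure A hA.subset_ground hv.1
      have hsubC : ({u, v} : Set α) ⊆ M.closure C := huvC.trans (M.subset_closure C hCE)
      rcases hM hA hC huv huvind hsubA hsubC with h | h
      · exact (heC (h (M.subset_closure A hA.subset_ground heA))).elim
      · refine Or.inl ⟨A, hA, subset_antisymm ?_ ?_⟩
        · exact M.closure_subset_closure_of_subset_closure hAsubcl
        · refine M.closure_subset_closure_of_subset_closure (union_subset ?_ ?_)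
          · exact (M.subset_closure C hCE).trans h
          · exact singleton_subset_iff.2 (M.subset_closure A hA.subset_ground heA)
    · push_neg at htwo
      obtain ⟨c, hc⟩ := hA'ne
      have hccl : c ∈ M.closure {e, z} := by
        have h1 : c ∈ M.closure (A \ {c}) := hA.mem_closure_diff_singleton hc.1
        have h2 : A \ {c} ⊆ ({e, z} : Set α) := by
          rintro y ⟨hyA, hyc⟩
          by_contra hyez
          exact hyc (htwo y ⟨hyA, hyez⟩ c hc)
        exact M.closure_subset_closure h2 h1
      exact Or.inr ⟨c, hA'sub hc, hccl⟩
  obtain ⟨x₀, hx₀⟩ := hC.nonempty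
  rcases step x₀ hx₀ with h | ⟨c, hc, hccl⟩
  · exact h
  rcases step c hc.1 with h | ⟨c', hc', hc'cl⟩
  · exact h
  exfalso
  have hne : c ≠ c' := fun h => hc'.2 (h ▸ rfl)
  have hpairC : ({c, c'} : Set α) ⊆ C := by
    rintro y (rfl | rfl)
    · exact hc.1
    · exact hc'.1
  have hpairne : ({c, c'} : Set α) ≠ C := by
    intro h
    rw [← h, encard_pair hne] at hcard
    norm_num at hcard
  have hpairind : M.Indep {c, c'} := hC.ssubset_indep (hpairC.ssubset_of_ne hpairne)
  have hepaircl : e ∉ M.closure {c, c'} :=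
    fun h => heC (M.closure_subset_closure hpairC h)
  have hein : e ∉ ({c, c'} : Set α) := by
    rintro (rfl | rfl)
    · exact heCm hc.1
    · exact heCm hc'.1
  have h3ind : M.Indep (insert e {c, c'}) :=
    (hpairind.insert_indep_iff_of_notMem hein).2 ⟨heE, hepaircl⟩
  have hsub3 : insert e ({c, c'} : Set α) ⊆ M.closure {e, z} := by
    refine insert_subset (M.subset_closure _ hze.subset_ground (Or.inl rfl)) ?_
    rintro y (rfl | rfl)
    · exact hccl
    · exact hc'cl
  have hle := h3ind.encard_le_encard_of_subset_closure hze hsub3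
  rw [encard_insert_of_notMem hein, encard_pair hne,
    encard_pair (fun h : e = z => hzne h.symm)] at hle
  norm_num at hle

end Matroid
namespace Matroid

variable {α : Type*} {M : Matroid α} {B C C₁ C₂ D I I' J R S X Y F A Q : Set α} {a b c e x z : α}

lemma TwoCL.contract_singleton (hM : M.TwoCL) (hfin : M.E.Finite) (he : M.Indep {e}) :
    (M.contract' {e}).TwoCL := by
  have heE : e ∈ M.E := singleton_subset_iff.1 he.subset_ground
  set N := M.contract' {e} with hN
  intro C₁ C₂ a b h₁ h₂ hab hind hs₁ hs₂
  obtain ⟨habE, habe⟩ := (contract_singleton_indep_iff he).1 hind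
  have habM : M.Indep {a, b} := habe.subset subset_union_left
  have hC₁E : C₁ ⊆ M.E \ {e} := by
    have := h₁.subset_ground; rwa [hN, contract'_ground] at this
  have hC₂E : C₂ ⊆ M.E \ {e} := by
    have := h₂.subset_ground; rwa [hN, contract'_ground] at this
  have hK₁ : N.closure C₁ = M.closure (C₁ ∪ {e}) \ {e} :=
    contract_closure_eq_of_basis he.subset_ground he.isBasis_self hC₁E
  have hK₂ : N.closure C₂ = M.closure (C₂ ∪ {e}) \ {e} :=
    contract_closure_eq_of_basis he.subset_ground he.isBasis_self hC₂E
  have hs₁' : {a, b} ⊆ M.closure (C₁ ∪ {e}) := by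
    rw [hK₁] at hs₁; exact hs₁.trans diff_subset
  have hs₂' : {a, b} ⊆ M.closure (C₂ ∪ {e}) := by
    rw [hK₂] at hs₂; exact hs₂.trans diff_subset
  -- The per-side claim: each of the two flats is associated to a circuit of `M`.
  have side : ∀ C', N.Circuit C' → C' ⊆ M.E \ {e} → {a, b} ⊆ M.closure (C' ∪ {e}) →
      ∃ Q, M.Circuit Q ∧ {a, b} ⊆ M.closure Q ∧
        (M.closure Q = M.closure (C' ∪ {e}) ∨
          (e ∉ M.closure Q ∧ M.closure (C' ∪ {e}) = M.closure (Q ∪ {e}))) := by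
    intro C' hC' hC'E hsubK
    obtain ⟨D, hD, hCD, hDC⟩ := contract_singleton_circuit hfin he hC'
    by_cases hecl : e ∈ M.closure D
    · have h1 : M.closure (C' ∪ {e}) = M.closure D := by
        have hDcl : M.closure (D ∪ {e}) = M.closure D := by
          rw [union_singleton, closure_insert_eq_of_mem_closure hecl]
        refine subset_antisymm ?_ (M.closure_subset_closure hDC)
        rw [← hDcl]
        exact M.closure_subset_closure (union_subset_union_left _ hCD)
      exact ⟨D, hD, h1 ▸ hsubK, Or.inl h1.symm⟩
    · have heD : e ∉ D := fun h => hecl (M.subset_closure D hD.subset_ground h)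
      have hDC' : D = C' := subset_antisymm
        (fun y hy => (hDC hy).resolve_right (fun h => heD ((mem_singleton_iff.1 h) ▸ hy))) hCD
      subst hDC'
      by_cases hab' : {a, b} ⊆ M.closure D
      · exact ⟨D, hD, hab', Or.inr ⟨hecl, rfl⟩⟩
      · obtain ⟨z, hzab, hzcl⟩ : ∃ z ∈ ({a, b} : Set α), z ∉ M.closure D := by
          by_contra hcon
          push_neg at hcon
          exact hab' hcon
        obtain ⟨x₀, hx₀⟩ := hD.nonempty
        obtain ⟨hI₀, hI₀cl⟩ := circuit_insert_aux hD heE hecl hx₀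
        have heD' : e ∉ D \ {x₀} := fun h => heD h.1
        have h3 : 3 ≤ D.encard := by
          have hsub3 : ({a, b} ∪ {e} : Set α) ⊆ M.closure (insert e (D \ {x₀})) := by
            rw [hI₀cl]
            refine union_subset hsubK (singleton_subset_iff.2 ?_)
            exact M.subset_closure _
              (union_subset (hC'E.trans diff_subset) he.subset_ground) (Or.inr rfl)
          have hle := habe.encard_le_encard_of_subset_closure hI₀ hsub3
          have heab : e ∉ ({a, b} : Set α) := by
            rintro (rfl | rfl)
            · exact (habE (Or.inl rfl)).2 rfl
            · exact (habE (Or.inr rfl)).2 rfl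
          rw [union_singleton, encard_insert_of_notMem heab, encard_pair hab,
            encard_insert_of_notMem heD', encard_diff_singleton_add_one hx₀] at hle
          exact le_trans (by norm_num) hle
        have hzne : z ≠ e := fun h => (habE hzab).2 (h ▸ rfl)
        have hze : M.Indep {e, z} := habe.subset (by
          rintro y (rfl | rfl)
          · exact Or.inr rfl
          · exact Or.inl hzab)
        obtain ⟨A, hA, hAcl⟩ :=
          hM.exists_spanning_circuit hfin hD heE hecl h3 (hsubK hzab) hze hzne hzcl
        exact ⟨A, hA, by rw [hAcl]; exact hsubK, Or.inl hAcl⟩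
  obtain ⟨Q₁, hQ₁, hQ₁ab, hQ₁K⟩ := side C₁ h₁ hC₁E hs₁'
  obtain ⟨Q₂, hQ₂, hQ₂ab, hQ₂K⟩ := side C₂ h₂ hC₂E hs₂'
  -- combining the two sides
  have hcomb : ∀ Q Q' CC CC' : Set α, Q ⊆ M.E → Q' ⊆ M.E → CC ⊆ M.E → CC' ⊆ M.E →
      (M.closure Q = M.closure (CC ∪ {e}) ∨
        (e ∉ M.closure Q ∧ M.closure (CC ∪ {e}) = M.closure (Q ∪ {e}))) →
      (M.closure Q' = M.closure (CC' ∪ {e}) ∨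
        (e ∉ M.closure Q' ∧ M.closure (CC' ∪ {e}) = M.closure (Q' ∪ {e}))) →
      M.closure Q ⊆ M.closure Q' →
      M.closure (CC ∪ {e}) ⊆ M.closure (CC' ∪ {e}) := by
    rintro Q Q' CC CC' hQE hQ'E hCCE hCC'E (h1 | ⟨he1, h1⟩) (h2 | ⟨he2, h2⟩) hss
    · rw [← h1, ← h2]; exact hss
    · have hmem : e ∈ M.closure Q := by
        rw [h1]
        exact M.subset_closure _ (union_subset hCCE he.subset_ground) (Or.inr rfl)
      exact absurd (hss hmem) he2
    · rw [h1, ← h2]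
      refine M.closure_subset_closure_of_subset_closure (union_subset ?_ ?_)
      · exact (M.subset_closure Q hQE).trans hss
      · refine singleton_subset_iff.2 ?_
        rw [h2]
        exact M.subset_closure _ (union_subset hCC'E he.subset_ground) (Or.inr rfl)
    · rw [h1, h2]
      refine M.closure_subset_closure_of_subset_closure (union_subset ?_ ?_)
      · exact (M.subset_closure Q hQE).trans
          (hss.trans (M.closure_subset_closure subset_union_left))
      · exact singleton_subset_iff.2
          (M.subset_closure _ (union_subset hQ'E he.subset_ground) (Or.inr rfl))
  have hCCE₁ : C₁ ⊆ M.E := hC₁E.trans diff_subset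
  have hCCE₂ : C₂ ⊆ M.E := hC₂E.trans diff_subset
  rcases hM hQ₁ hQ₂ hab habM hQ₁ab hQ₂ab with hss | hss
  · left
    rw [hK₁, hK₂]
    exact diff_subset_diff_left (hcomb Q₁ Q₂ C₁ C₂ hQ₁.subset_ground hQ₂.subset_ground
      hCCE₁ hCCE₂ hQ₁K hQ₂K hss)
  · right
    rw [hK₁, hK₂]
    exact diff_subset_diff_left (hcomb Q₂ Q₁ C₂ C₁ hQ₂.subset_ground hQ₁.subset_ground
      hCCE₂ hCCE₁ hQ₂K hQ₁K hss)

lemma TwoCL.contract_of_indep_aux :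
    ∀ (I : Set α), I.Finite → ∀ (M : Matroid α), M.E.Finite → M.TwoCL → M.Indep I →
      (M.contract' I).TwoCL := by
  intro I hIfin
  refine Set.Finite.induction_on
    (motive := fun s _ => ∀ (M : Matroid α), M.E.Finite → M.TwoCL → M.Indep s →
      (M.contract' s).TwoCL) _ hIfin ?_ ?_
  · intro M _ hM _
    rwa [contract'_empty]
  · intro x s hxs hsfin IH M hfin hM hI
    have hx : M.Indep {x} := hI.subset (singleton_subset_iff.2 (mem_insert x s))
    rw [show insert x s = {x} ∪ s from (singleton_union).symm, ← contract'_contract]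
    refine IH (M.contract' {x}) ?_ (hM.contract_singleton hfin hx) ?_
    · rw [contract'_ground]
      exact hfin.diff (t := {x})
    · rw [contract_singleton_indep_iff hx]
      refine ⟨fun y hy =>
        ⟨hI.subset_ground (mem_insert_of_mem x hy), fun h => hxs (h ▸ hy)⟩, ?_⟩
      rwa [union_singleton]

lemma contract_eq_contract_delete (hX : X ⊆ M.E) (hI : M.IsBasis I X) :
    M.contract' X = (M.contract' I).delete' (X \ I) := by
  have hIE : I ⊆ M.E := hI.indep.subset_ground
  have hIX : I ⊆ X := hI.subset
  have hg : ((M.contract' I).delete' (X \ I)).E = M.E \ X := by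
    show ((M.contract' I) ↾ ((M.contract' I).E \ (X \ I))).E = _
    rw [restrict_ground_eq, contract'_ground, diff_diff, union_diff_cancel hIX]
  refine ext_indep ?_ ?_
  · rw [contract'_ground, hg]
  · intro J hJ
    rw [contract'_ground] at hJ
    rw [contract_indep_iff_of_basis hX hI]
    show _ ↔ ((M.contract' I) ↾ ((M.contract' I).E \ (X \ I))).Indep J
    rw [restrict_indep_iff, contract_indep_iff_of_basis hIE hI.indep.isBasis_self,
      contract'_ground]
    constructor
    · rintro ⟨h1, h2⟩
      exact ⟨⟨fun y hy => ⟨(h1 hy).1, fun hyI => (h1 hy).2 (hIX hyI)⟩, h2⟩,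
        fun y hy => ⟨⟨(h1 hy).1, fun hyI => (h1 hy).2 (hIX hyI)⟩,
          fun hyXI => (h1 hy).2 hyXI.1⟩⟩
    · rintro ⟨⟨h1, h2⟩, h3⟩
      refine ⟨fun y hy => ⟨(h1 hy).1, fun hyX => ?_⟩, h2⟩
      by_cases hyI : y ∈ I
      · exact (h1 hy).2 hyI
      · exact (h3 hy).2 ⟨hyX, hyI⟩

end Matroid

/-- the class of `2`-closure-laminar matroids is minor-closed. -/
theorem twoClosureLaminar_minorClosed {α : Type*} (M : Matroid α) [M.Finite]
    (h : M.KClosureLaminar 2) (X : Set α) :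
    (M.delete' X).KClosureLaminar 2 ∧ (M.contract' X).KClosureLaminar 2 := by
  have hfin : M.E.Finite := M.ground_finite
  have hM : M.TwoCL := h.twoCL
  refine ⟨(hM.delete X).kClosureLaminar, ?_⟩
  rw [← M.contract_inter_ground X]
  obtain ⟨I, hI⟩ := M.exists_isBasis (X ∩ M.E) Set.inter_subset_right
  rw [Matroid.contract_eq_contract_delete Set.inter_subset_right hI]
  have hcon : (M.contract' I).TwoCL :=
    Matroid.TwoCL.contract_of_indep_aux I (hfin.subset hI.indep.subset_ground) M hfin hM hI.indep
  exact (hcon.delete _).kClosureLaminar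
end
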